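/- arXiv:2407.16778 — 6 statements merged into one kernel-verified Lean document; each statement's English description precedes it below -/
import Mathlib

section
/- Let n ≥ 1, let p be an integer with 1 ≤ p ≤ n, let A be an n×n real matrix, let λ ∈ ℝ, and let x : {1,…,n} → ℝ ∪ {−∞} be a vector that is not identically −∞. If f^{(p)}(x)_i = λ + x_i for all i (where λ + (−∞) = −∞), then x_i ≠ −∞ for every i; that is, every eigenvector of f^{(p)} associated with a finite eigenvalue has full support. -/
/-- The maxmin-`p` map `f^{(p)}` on vectors over `ℝ ∪ {−∞}` (modeled as `WithBot ℝ`):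
`f^{(p)}(x)_i` is the minimum over all `p`-element subsets `C` of `{1,…,n}` of
`max_{j ∈ C} (A i j + x j)`, where addition satisfies `r + ⊥ = ⊥` and `⊥` is the bottom
element for `max` (given by `Finset.sup`). -/
noncomputable def fp {n : ℕ} (p : ℕ) (A : Fin n → Fin n → ℝ) (x : Fin n → WithBot ℝ) :
    Fin n → WithBot ℝ :=
  fun i => sInf {v : WithBot ℝ | ∃ C : Finset (Fin n), C.card = p ∧
    v = C.sup (fun j => (A i j : WithBot ℝ) + x j)}

/-- Every eigenvector of `f^{(p)}` associated with a finite eigenvalue has full support. -/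
theorem eigenvector_full_support (n p : ℕ) (hn : 1 ≤ n) (hp1 : 1 ≤ p) (hpn : p ≤ n)
    (A : Fin n → Fin n → ℝ) (lam : ℝ) (x : Fin n → WithBot ℝ)
    (hx : ∃ i, x i ≠ ⊥)
    (heig : ∀ i, fp p A x i = (lam : WithBot ℝ) + x i) :
    ∀ i, x i ≠ ⊥ := by
  classical
  obtain ⟨i0, hi0⟩ := hx
  set B : Finset (Fin n) := Finset.univ.filter (fun j => x j = ⊥) with hB
  -- Step 1: B.card < p
  have hBcard : B.card < p := by
    by_contra h
    push_neg at h
    obtain ⟨C, hCB, hCcard⟩ := Finset.exists_subset_card_eq h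
    have hsup : C.sup (fun j => (A i0 j : WithBot ℝ) + x j) = ⊥ := by
      apply (Finset.sup_eq_bot_iff _ _).mpr
      intro j hj
      have : x j = ⊥ := (Finset.mem_filter.mp (hCB hj)).2
      simp [this]
    have hmem : (⊥ : WithBot ℝ) ∈ {v : WithBot ℝ | ∃ C : Finset (Fin n), C.card = p ∧
        v = C.sup (fun j => (A i0 j : WithBot ℝ) + x j)} := ⟨C, hCcard, hsup.symm⟩
    have hle : fp p A x i0 ≤ ⊥ := csInf_le (OrderBot.bddBelow _) hmem
    have : (lam : WithBot ℝ) + x i0 = ⊥ := le_bot_iff.mp (heig i0 ▸ hle)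
    rcases WithBot.add_eq_bot.mp this with h' | h'
    · exact WithBot.coe_ne_bot h'
    · exact hi0 h'
  -- Step 2: every index has x i ≠ ⊥
  intro i hib
  have hfbot : fp p A x i = ⊥ := by
    rw [heig i, hib]; simp
  set S : Set (WithBot ℝ) := {v : WithBot ℝ | ∃ C : Finset (Fin n), C.card = p ∧
      v = C.sup (fun j => (A i j : WithBot ℝ) + x j)} with hS
  have hSne : S.Nonempty := by
    obtain ⟨C, _, hCcard⟩ := Finset.exists_subset_card_eq (by simpa using hpn :
      p ≤ (Finset.univ : Finset (Fin n)).card)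
    exact ⟨_, C, hCcard, rfl⟩
  have hSfin : S.Finite := by
    have : S ⊆ Set.range (fun C : Finset (Fin n) =>
        C.sup (fun j => (A i j : WithBot ℝ) + x j)) := by
      rintro v ⟨C, _, rfl⟩; exact ⟨C, rfl⟩
    exact (Set.finite_range _).subset this
  obtain ⟨m, hmS, hmin⟩ := hSfin.toFinset.exists_min_image id
    (by simpa [Set.Finite.toFinset_nonempty] using hSne)
  have hmem : sInf S ∈ S := by
    have hleast : IsLeast S m := ⟨hSfin.mem_toFinset.mp hmS,
      fun a ha => hmin a (hSfin.mem_toFinset.mpr ha)⟩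
    rw [hleast.csInf_eq]; exact hleast.1
  obtain ⟨C, hCcard, hCeq⟩ := hmem
  have hsupbot : C.sup (fun j => (A i j : WithBot ℝ) + x j) = ⊥ := by
    rw [← hCeq]; exact hfbot
  have hCB : C ⊆ B := by
    intro j hj
    have hjb : (A i j : WithBot ℝ) + x j = ⊥ := (Finset.sup_eq_bot_iff _ _).mp hsupbot j hj
    rcases WithBot.add_eq_bot.mp hjb with h' | h'
    · exact absurd h' (WithBot.coe_ne_bot)
    · exact Finset.mem_filter.mpr ⟨Finset.mem_univ j, h'⟩
  have : p ≤ B.card := hCcard ▸ Finset.card_le_card hCB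
  omega
end

section
/- Let n ≥ 1, let p be an integer with 1 ≤ p ≤ n, and let A be an n×n real matrix. Then there exists exactly one real number λ such that there exists a vector x ∈ ℝⁿ with (A ⊗_p x)_i = λ + x_i for all i ∈ {1,…,n}. -/
/-- The maxmin-`p` value of `s : Fin n → ℝ`: the `p`-th smallest element (1-indexed) of the
multiset `{s 0, …, s (n-1)}`, counted with multiplicity. -/
noncomputable def maxmin {n : ℕ} (p : ℕ) (s : Fin n → ℝ) : ℝ :=
  (Multiset.sort (Multiset.map s (Finset.univ : Finset (Fin n)).val) (· ≤ ·)).getD (p - 1) 0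

/-- The maxmin-`p` matrix-vector product: `(A ⊗_p x)_i = ⊕_p (j ↦ A i j + x j)`. -/
noncomputable def mmProd {n : ℕ} (p : ℕ) (A : Fin n → Fin n → ℝ) (x : Fin n → ℝ) :
    Fin n → ℝ :=
  fun i => maxmin p (fun j => A i j + x j)

/-!
The map `F = mmProd p A` is topical: monotone and commuting with adding constants, because the
`p`-th smallest entry is. Hence `F` is `1`-Lipschitz for the sup norm, so for `a < 1` the
discounted map `a • F` is a contraction with a fixed point `x_a`. Normalising `x_a` to vanish at a
fixed coordinate gives vectors that are bounded, since the rows of `A` differ by a bounded amount; a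
limit point as `a → 1` is an eigenvector. Uniqueness of the eigenvalue holds for any topical map:
compare two eigenvectors at a coordinate where their difference is maximal.
-/

open Filter Topology Metric Function

lemma exists_isFixedPt_of_forall_smul {E : Type*} [NormedAddCommGroup E] [NormedSpace ℝ E]
    [ProperSpace E] {G : E → E} (hG : Continuous G) {R : ℝ} (hR : ∀ y, ‖G y‖ ≤ R)
    (h : ∀ a : ℝ, 0 ≤ a → a < 1 → ∃ y, IsFixedPt (a • G) y) : ∃ y, IsFixedPt G y := by
  have ha (k : ℕ) : (k : ℝ) / (k + 1) < 1 := (div_lt_one (by positivity)).2 (by linarith)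
  choose y hy using fun k : ℕ => h (k / (k + 1)) (by positivity) (ha k)
  have hy_mem (k : ℕ) : y k ∈ closedBall 0 R := by
    rw [mem_closedBall_zero_iff, ← hy k, Pi.smul_apply, norm_smul,
      Real.norm_of_nonneg (by positivity)]
    nlinarith [ha k, hR (y k), norm_nonneg (G (y k))]
  obtain ⟨z, -, φ, hφ, hlim⟩ := (isCompact_closedBall 0 R).tendsto_subseq hy_mem
  have hlim' :
      Tendsto (fun k => ((φ k : ℝ) / (φ k + 1)) • G (y (φ k))) atTop (𝓝 ((1 : ℝ) • G z)) :=
    ((tendsto_natCast_div_add_atTop 1).comp hφ.tendsto_atTop).smul ((hG.tendsto z).comp hlim)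
  rw [one_smul] at hlim'
  exact ⟨z, tendsto_nhds_unique hlim' (hlim.congr fun k => (hy (φ k)).symm)⟩

variable {ι : Type*}

structure IsTopical (F : (ι → ℝ) → ι → ℝ) : Prop where
  monotone : Monotone F
  map_add_const : ∀ x (c : ℝ), F (fun j => x j + c) = fun i => F x i + c

namespace IsTopical

variable {F : (ι → ℝ) → ι → ℝ}

lemma of_apply_le_add (h : ∀ x y d, (∀ j, x j ≤ y j + d) → ∀ i, F x i ≤ F y i + d) :
    IsTopical F where
  monotone x y hxy i := by simpa using h x y 0 (fun j => by simpa using hxy j) i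
  map_add_const x c := funext fun i => le_antisymm (h _ x c (fun _ => le_rfl) i)
    (by linarith [h x (fun j => x j + c) (-c) (fun j => by linarith) i])

lemma apply_le_add (hF : IsTopical F) {x y : ι → ℝ} {d : ℝ} (h : ∀ j, x j ≤ y j + d) (i : ι) :
    F x i ≤ F y i + d := by
  have := hF.monotone (show x ≤ fun j => y j + d from h) i
  rwa [hF.map_add_const] at this

lemma eigenvalue_le [Finite ι] [Nonempty ι] (hF : IsTopical F) {x y : ι → ℝ} {l m : ℝ}
    (hx : ∀ i, F x i = l + x i) (hy : ∀ i, F y i = m + y i) : l ≤ m := by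
  obtain ⟨i, hi⟩ := Finite.exists_max fun j => x j - y j
  have := hF.apply_le_add (x := x) (y := y) (d := x i - y i) (fun j => by linarith [hi j]) i
  linarith [hx i, hy i]

variable [Fintype ι]

lemma lipschitzWith_one (hF : IsTopical F) : LipschitzWith 1 F := by
  refine LipschitzWith.of_dist_le_mul fun x y => ?_
  have hxy (j : ι) : x j ≤ y j + dist x y ∧ y j ≤ x j + dist x y := by
    have := abs_le.1 (Real.dist_eq (x j) (y j) ▸ dist_le_pi_dist x y j)
    constructor <;> linarith
  rw [NNReal.coe_one, one_mul, dist_pi_le_iff dist_nonneg]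
  intro i
  rw [Real.dist_eq, abs_le]
  constructor
  · linarith [hF.apply_le_add (fun j => (hxy j).2) i]
  · linarith [hF.apply_le_add (fun j => (hxy j).1) i]

lemma exists_isFixedPt_smul (hF : IsTopical F) {a : ℝ} (ha0 : 0 ≤ a) (ha1 : a < 1) :
    ∃ x, IsFixedPt (a • F) x := by
  have hcontr : ContractingWith ‖a‖₊ (a • F) := by
    refine ⟨by rwa [← NNReal.coe_lt_coe, coe_nnnorm, Real.norm_of_nonneg ha0], ?_⟩
    have h := (lipschitzWith_smul a).comp hF.lipschitzWith_one
    rw [mul_one] at h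
    exact h
  exact ⟨_, hcontr.fixedPoint_isFixedPt⟩

lemma exists_eigenvector [Nonempty ι] (hF : IsTopical F) {C : ℝ}
    (hC : ∀ x i j, F x i ≤ F x j + C) : ∃ l x, ∀ i, F x i = l + x i := by
  inhabit ι
  set G : (ι → ℝ) → ι → ℝ := fun y i => F y i - F y default with hG
  have hG_cont : Continuous G := by
    have := hF.lipschitzWith_one.continuous
    fun_prop
  have hG_bound (y : ι → ℝ) : ‖G y‖ ≤ C := by
    refine (pi_norm_le_iff_of_nonneg (by linarith [hC y default default])).2 fun i => ?_
    rw [Real.norm_eq_abs, abs_le]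
    constructor <;> linarith [hC y i default, hC y default i]
  have hG_shift (x : ι → ℝ) (c : ℝ) : G (fun j => x j + c) = G x := by
    funext i
    simp only [hG, hF.map_add_const]
    ring
  obtain ⟨z, hz⟩ := exists_isFixedPt_of_forall_smul hG_cont hG_bound fun a ha0 ha1 => by
    obtain ⟨x, hx⟩ := hF.exists_isFixedPt_smul ha0 ha1
    replace hx (j : ι) : x j = a * F x j := (congrFun hx j).symm
    refine ⟨fun j => x j + -x default, ?_⟩
    rw [IsFixedPt, Pi.smul_apply, hG_shift]
    funext i
    simp only [hG, Pi.smul_apply, smul_eq_mul]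
    rw [hx i, hx default]
    ring
  refine ⟨F z default, z, fun i => ?_⟩
  have := congrFun hz i
  simp only [hG] at this
  linarith

end IsTopical

open Finset

variable {n p : ℕ}

lemma sort_map_univ_val {α : Type*} [LinearOrder α] (s : Fin n → α) :
    Multiset.sort (Multiset.map s (univ : Finset (Fin n)).val) (· ≤ ·) =
      List.ofFn (s ∘ Tuple.sort s) := by
  refine List.Perm.eq_of_pairwise' (Multiset.pairwise_sort _ _)
    (Tuple.monotone_sort s).sortedLE_ofFn.pairwise ?_
  rw [← Multiset.coe_eq_coe, Multiset.sort_eq, Fin.univ_val_map, Multiset.coe_eq_coe]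
  exact ((Tuple.sort s).ofFn_comp_perm s).symm

lemma maxmin_eq_apply_sort (hp1 : 1 ≤ p) (hpn : p ≤ n) (s : Fin n → ℝ) :
    maxmin p s = s (Tuple.sort s ⟨p - 1, by omega⟩) := by
  rw [maxmin, sort_map_univ_val, List.getD_eq_getElem _ _ (by simp; omega), List.getElem_ofFn]
  rfl

lemma maxmin_le_iff (hp1 : 1 ≤ p) (hpn : p ≤ n) (s : Fin n → ℝ) (v : ℝ) :
    maxmin p s ≤ v ↔ p ≤ #{j | s j ≤ v} := by
  rw [maxmin_eq_apply_sort hp1 hpn, ← Function.comp_apply (f := s),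
    ← Tuple.lt_card_le_iff_apply_le_of_monotone (Tuple.monotone_sort s)]
  have : #{i | (s ∘ Tuple.sort s) i ≤ v} = #{j | s j ≤ v} :=
    Finset.card_equiv (Tuple.sort s) (by simp)
  simp only [this]
  omega

lemma maxmin_le_maxmin_add (hp1 : 1 ≤ p) (hpn : p ≤ n) {s t : Fin n → ℝ} {c : ℝ}
    (h : ∀ j, s j ≤ t j + c) : maxmin p s ≤ maxmin p t + c := by
  rw [maxmin_le_iff hp1 hpn]
  calc p ≤ #{j | t j ≤ maxmin p t} := (maxmin_le_iff hp1 hpn t _).1 le_rfl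
    _ ≤ #{j | s j ≤ maxmin p t + c} :=
      card_le_card fun j hj => by simp only [mem_filter_univ] at hj ⊢; linarith [h j]

lemma isTopical_mmProd (hp1 : 1 ≤ p) (hpn : p ≤ n) (A : Fin n → Fin n → ℝ) :
    IsTopical (mmProd p A) :=
  .of_apply_le_add fun _ _ _ h _ => maxmin_le_maxmin_add hp1 hpn fun j => by linarith [h j]

lemma mmProd_apply_le_apply_add_two_mul_norm (hp1 : 1 ≤ p) (hpn : p ≤ n) (A : Fin n → Fin n → ℝ)
    (x : Fin n → ℝ) (i i' : Fin n) : mmProd p A x i ≤ mmProd p A x i' + 2 * ‖A‖ := by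
  refine maxmin_le_maxmin_add hp1 hpn fun j => ?_
  have hA (k : Fin n) : |A k j| ≤ ‖A‖ :=
    (norm_le_pi_norm (A k) j).trans (norm_le_pi_norm A k)
  linarith [abs_le.1 (hA i), abs_le.1 (hA i')]

theorem maxmin_eigenvalue_exists_unique_general (n p : ℕ) (hp1 : 1 ≤ p) (hpn : p ≤ n)
    (A : Fin n → Fin n → ℝ) :
    ∃! lam : ℝ, ∃ x : Fin n → ℝ, ∀ i, mmProd p A x i = lam + x i := by
  have : Nonempty (Fin n) := ⟨⟨0, by omega⟩⟩
  have hF := isTopical_mmProd hp1 hpn A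
  obtain ⟨lam, x, hx⟩ := hF.exists_eigenvector (mmProd_apply_le_apply_add_two_mul_norm hp1 hpn A)
  exact ⟨lam, ⟨x, hx⟩, fun _ ⟨y, hy⟩ =>
    le_antisymm (hF.eigenvalue_le hy hx) (hF.eigenvalue_le hx hy)⟩

/-- There is exactly one real number `λ` admitting a finite maxmin-`p` eigenvector. -/
theorem maxmin_eigenvalue_exists_unique (n p : ℕ) (hn : 1 ≤ n) (hp1 : 1 ≤ p) (hpn : p ≤ n)
    (A : Fin n → Fin n → ℝ) :
    ∃! lam : ℝ, ∃ x : Fin n → ℝ, ∀ i, mmProd p A x i = lam + x i :=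
  maxmin_eigenvalue_exists_unique_general n p hp1 hpn A
end

section
/- Let n ≥ 1, let p be an integer with 1 ≤ p ≤ n, let A be an n×n real matrix, and suppose x ∈ ℝⁿ and λ ∈ ℝ satisfy (A ⊗_p x)_i = λ + x_i for all i. Then there exist k with 1 ≤ k ≤ n and an injective map c : ℤ/kℤ → {1,…,n} such that (A ⊗_p x)_{c(m)} = A(c(m), c(m+1)) + x_{c(m+1)} for every m ∈ ℤ/kℤ, and Σ_{m ∈ ℤ/kℤ} A(c(m), c(m+1)) = k·λ. That is, the saturation graph Sat(A, p/n, x) contains a cycle whose mean weight equals λ. -/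
/-!
Since `⊕_p` picks an entry of its argument, every row `i` has a saturating column
`f i` with `(A ⊗_p x)_i = A i (f i) + x (f i)`. The self-map `f` of the finite set `{1,…,n}`
has a periodic orbit, which is a cycle of `Sat(A, p/n, x)`. Along each of its arcs
`A i (f i) = λ + x i - x (f i)`, and the `x`-terms telescope around the cycle.
-/

theorem exists_maxmin_eq {n p : ℕ} (hn : 0 < n) (hpn : p ≤ n) (s : Fin n → ℝ) :
    ∃ j, maxmin p s = s j := by
  set l := Multiset.sort (Multiset.map s (Finset.univ : Finset (Fin n)).val) (· ≤ ·)
  have hlt : p - 1 < l.length := by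
    simp only [l, Multiset.length_sort, Multiset.card_map, Finset.card_val, Finset.card_univ,
      Fintype.card_fin]
    omega
  have hmem : l[p - 1] ∈ Multiset.map s (Finset.univ : Finset (Fin n)).val :=
    (Multiset.mem_sort (· ≤ ·)).mp (List.getElem_mem hlt)
  obtain ⟨j, -, hj⟩ := Multiset.mem_map.mp hmem
  exact ⟨j, by rw [maxmin, List.getD_eq_getElem _ _ hlt, hj]⟩

theorem Function.exists_mem_periodicPts {α : Type*} [Finite α] [Nonempty α] (f : α → α) :
    ∃ y, y ∈ periodicPts f := by
  obtain ⟨a, b, hab, heq⟩ := Finite.exists_ne_map_eq_of_infinite (f^[·] (Classical.arbitrary α))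
  wlog hlt : a < b generalizing a b
  · exact this b a hab.symm heq.symm (by omega)
  refine ⟨f^[a] (Classical.arbitrary α), mk_mem_periodicPts (n := b - a) (by omega) ?_⟩
  rw [IsPeriodicPt, IsFixedPt, ← iterate_add_apply, Nat.sub_add_cancel hlt.le]
  exact heq.symm

theorem Fin.sum_sub_mk_add_one_mod {M : Type*} [AddCommGroup M] {k : ℕ} (hk : 0 < k)
    (g : Fin k → M) : ∑ m : Fin k, (g m - g ⟨(m.val + 1) % k, Nat.mod_lt _ hk⟩) = 0 := by
  have := NeZero.of_pos hk
  have hrot : ∀ m : Fin k, (⟨(m.val + 1) % k, Nat.mod_lt _ hk⟩ : Fin k) = finRotate k m := by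
    intro m
    rw [finRotate_apply]
    ext
    simp [Fin.val_add, Nat.add_mod]
  simp only [hrot, Finset.sum_sub_distrib, Equiv.sum_comp, sub_self]

theorem sum_weight_cycle_eq {n k : ℕ} (hk : 0 < k) (A : Fin n → Fin n → ℝ) (x : Fin n → ℝ)
    (lam : ℝ) (c : Fin k → Fin n)
    (hc : ∀ m : Fin k, lam + x (c m) =
      A (c m) (c ⟨(m.val + 1) % k, Nat.mod_lt _ hk⟩) + x (c ⟨(m.val + 1) % k, Nat.mod_lt _ hk⟩)) :
    ∑ m : Fin k, A (c m) (c ⟨(m.val + 1) % k, Nat.mod_lt _ hk⟩) = k * lam := by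
  have harc : ∀ m : Fin k, A (c m) (c ⟨(m.val + 1) % k, Nat.mod_lt _ hk⟩) =
      lam + (x (c m) - x (c ⟨(m.val + 1) % k, Nat.mod_lt _ hk⟩)) := fun m => by
    linarith [hc m]
  rw [Finset.sum_congr rfl fun m _ => harc m, Finset.sum_add_distrib,
    Fin.sum_sub_mk_add_one_mod hk fun m => x (c m)]
  simp

theorem saturation_graph_has_cycle_with_mean_general (n p : ℕ) (hn : 1 ≤ n)
    (hpn : p ≤ n) (A : Fin n → Fin n → ℝ) (x : Fin n → ℝ) (lam : ℝ)
    (hx : ∀ i, mmProd p A x i = lam + x i) :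
    ∃ k : ℕ, ∃ hk : 1 ≤ k, k ≤ n ∧ ∃ c : Fin k → Fin n, Function.Injective c ∧
      (∀ m : Fin k,
        mmProd p A x (c m) =
          A (c m) (c ⟨(m.val + 1) % k, Nat.mod_lt _ hk⟩) +
            x (c ⟨(m.val + 1) % k, Nat.mod_lt _ hk⟩)) ∧
      (∑ m : Fin k, A (c m) (c ⟨(m.val + 1) % k, Nat.mod_lt _ hk⟩)) = (k : ℝ) * lam := by
  choose f hf using fun i => exists_maxmin_eq hn hpn (fun j => A i j + x j)
  have : Nonempty (Fin n) := ⟨⟨0, hn⟩⟩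
  obtain ⟨y, hy⟩ := Function.exists_mem_periodicPts f
  have hk := Function.minimalPeriod_pos_of_mem_periodicPts hy
  have hsat : ∀ m : Fin (Function.minimalPeriod f y),
      mmProd p A x (f^[m] y) = A (f^[m] y) (f^[(m.val + 1) % Function.minimalPeriod f y] y) +
        x (f^[(m.val + 1) % Function.minimalPeriod f y] y) := fun m => by
    rw [Function.iterate_mod_minimalPeriod_eq, Function.iterate_succ_apply']
    exact hf _
  refine ⟨_, hk, Function.minimalPeriod_le_card.trans_eq (Fintype.card_fin n), (f^[·] y),
    fun a b h => Fin.ext (Function.iterate_injOn_Iio_minimalPeriod a.isLt b.isLt h), hsat,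
    sum_weight_cycle_eq hk A x lam _ fun m => ?_⟩
  rw [← hx]
  exact hsat m

/-- If `x` is a maxmin-`p` eigenvector of `A` with eigenvalue `λ`, then the saturation graph
`Sat(A, p/n, x)` contains a cycle (given by an injective `c : Fin k → Fin n`, with successor
taken cyclically) whose mean weight equals `λ`. -/
theorem saturation_graph_has_cycle_with_mean (n p : ℕ) (hn : 1 ≤ n) (hp1 : 1 ≤ p)
    (hpn : p ≤ n) (A : Fin n → Fin n → ℝ) (x : Fin n → ℝ) (lam : ℝ)
    (hx : ∀ i, mmProd p A x i = lam + x i) :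
    ∃ k : ℕ, ∃ hk : 1 ≤ k, k ≤ n ∧ ∃ c : Fin k → Fin n, Function.Injective c ∧
      (∀ m : Fin k,
        mmProd p A x (c m) =
          A (c m) (c ⟨(m.val + 1) % k, Nat.mod_lt _ hk⟩) +
            x (c ⟨(m.val + 1) % k, Nat.mod_lt _ hk⟩)) ∧
      (∑ m : Fin k, A (c m) (c ⟨(m.val + 1) % k, Nat.mod_lt _ hk⟩)) = (k : ℝ) * lam :=
  saturation_graph_has_cycle_with_mean_general n p hn hpn A x lam hx
end

section
/- Let n ≥ 1, let p be an integer with 1 ≤ p ≤ n, let a, b ∈ ℝⁿ, let D be an n×n matrix with entries in ℝ ∪ {−∞}, and let x ∈ ℝⁿ satisfy D(i,j) ≤ x_i − x_j for all i, j (inequality in ℝ ∪ {−∞}). Then ⊕_p(i ↦ a_i + x_i) − ⊕_p(j ↦ b_j + x_j) ≥ MinMaxValue(F | p, n+1−p), where F is the n×n matrix over ℝ ∪ {−∞} with F(i,j) = a_i − b_j + D(i,j) (with −∞ + r = −∞). -/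
/-- `MinMaxValue(F | p, n+1−p)`: the minimum over all pairs `(S₁, S₂)` of subsets of
`{1,…,n}` with `|S₁| = p` and `|S₂| = n+1−p` of `max_{(i,j) ∈ S₁×S₂} F i j`, where the
entries lie in `ℝ ∪ {−∞}` (modeled as `WithBot ℝ`). -/
noncomputable def minMaxValue {n : ℕ} (p : ℕ) (F : Fin n → Fin n → WithBot ℝ) : WithBot ℝ :=
  sInf {v : WithBot ℝ | ∃ S₁ S₂ : Finset (Fin n), S₁.card = p ∧ S₂.card = n + 1 - p ∧
    v = (S₁ ×ˢ S₂).sup (fun q => F q.1 q.2)}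

/-!
Let `α = ⊕_p(a + x)` and `β = ⊕_p(b + x)`. At least `p` indices `i` have `a i + x i ≤ α`, and at
least `n + 1 - p` indices `j` have `β ≤ b j + x j`; take such sets as `S₁` and `S₂`. For
`(i, j) ∈ S₁ × S₂` the zone condition gives
`F i j ≤ a i - b j + x i - x j = (a i + x i) - (b j + x j) ≤ α - β`,
so the maximum of `F` over `S₁ × S₂`, and hence `MinMaxValue(F | p, n+1−p)`, is at most `α - β`.
-/

namespace List.Pairwise

variable {α : Type*} [Preorder α] [DecidableLE α] {l : List α}

theorem succ_le_countP_le_getElem (h : l.Pairwise (· ≤ ·)) {k : ℕ} (hk : k < l.length) :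
    k + 1 ≤ l.countP (fun v => v ≤ l[k]) := by
  have hprefix : (l.take (k + 1)).countP (fun v => v ≤ l[k]) = k + 1 := by
    rw [countP_eq_length.mpr, length_take]
    · omega
    · intro v hv
      obtain ⟨i, hi, rfl⟩ := getElem_of_mem hv
      rw [length_take] at hi
      rw [getElem_take, decide_eq_true_eq]
      exact h.rel_get_of_le (a := ⟨i, by omega⟩) (b := ⟨k, hk⟩) (Fin.mk_le_mk.mpr (by omega))
  exact hprefix ▸ (take_sublist _ _).countP_le

theorem length_sub_le_countP_getElem_le (h : l.Pairwise (· ≤ ·)) {k : ℕ} (hk : k < l.length) :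
    l.length - k ≤ l.countP (fun v => l[k] ≤ v) := by
  have hsuffix : (l.drop k).countP (fun v => l[k] ≤ v) = l.length - k := by
    rw [countP_eq_length.mpr, length_drop]
    intro v hv
    obtain ⟨i, hi, rfl⟩ := getElem_of_mem hv
    rw [length_drop] at hi
    rw [getElem_drop, decide_eq_true_eq]
    exact h.rel_get_of_le (a := ⟨k, hk⟩) (b := ⟨k + i, by omega⟩) (Fin.mk_le_mk.mpr (by omega))
  exact hsuffix ▸ (drop_sublist _ _).countP_le

end List.Pairwise

section maxmin

variable {n p : ℕ} (s : Fin n → ℝ)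

theorem card_filter_eq_countP_sort (P : ℝ → Prop) [DecidablePred P] :
    (Finset.univ.filter (fun i => P (s i))).card =
      (Multiset.sort (Multiset.map s Finset.univ.val) (· ≤ ·)).countP (fun v => P v) := by
  rw [← Multiset.coe_countP, Multiset.sort_eq, Multiset.countP_map]
  rfl

theorem maxmin_eq_getElem_sort (hp : p - 1 < n) :
    maxmin p s = (Multiset.sort (Multiset.map s Finset.univ.val) (· ≤ ·))[p - 1]'(by simpa) := by
  rw [maxmin, List.getD_eq_getElem]

theorem exists_card_eq_forall_le_maxmin (hp1 : 1 ≤ p) (hpn : p ≤ n) :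
    ∃ S : Finset (Fin n), S.card = p ∧ ∀ i ∈ S, s i ≤ maxmin p s := by
  have hcard : p ≤ (Finset.univ.filter (fun i => s i ≤ maxmin p s)).card := by
    rw [card_filter_eq_countP_sort s (· ≤ maxmin p s), maxmin_eq_getElem_sort s (by omega)]
    convert (Multiset.pairwise_sort _ _).succ_le_countP_le_getElem _ using 1
    omega
  obtain ⟨S, hS, hScard⟩ := Finset.exists_subset_card_eq hcard
  exact ⟨S, hScard, fun i hi => (Finset.mem_filter.mp (hS hi)).2⟩

theorem exists_card_eq_forall_maxmin_le (hp1 : 1 ≤ p) (hpn : p ≤ n) :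
    ∃ T : Finset (Fin n), T.card = n + 1 - p ∧ ∀ j ∈ T, maxmin p s ≤ s j := by
  have hcard : n + 1 - p ≤ (Finset.univ.filter (fun j => maxmin p s ≤ s j)).card := by
    rw [card_filter_eq_countP_sort s (maxmin p s ≤ ·), maxmin_eq_getElem_sort s (by omega)]
    convert (Multiset.pairwise_sort _ _).length_sub_le_countP_getElem_le _ using 1
    simp only [Multiset.length_sort, Multiset.card_map, Finset.card_val, Finset.card_univ,
      Fintype.card_fin]
    omega
  obtain ⟨T, hT, hTcard⟩ := Finset.exists_subset_card_eq hcard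
  exact ⟨T, hTcard, fun j hj => (Finset.mem_filter.mp (hT hj)).2⟩

end maxmin

theorem minMaxValue_le_sup {n p : ℕ} (F : Fin n → Fin n → WithBot ℝ) {S₁ S₂ : Finset (Fin n)}
    (h₁ : S₁.card = p) (h₂ : S₂.card = n + 1 - p) :
    minMaxValue p F ≤ (S₁ ×ˢ S₂).sup (fun q => F q.1 q.2) :=
  csInf_le (OrderBot.bddBelow _) ⟨S₁, S₂, h₁, h₂, rfl⟩

theorem maxmin_diff_ge_minMaxValue_general (n p : ℕ) (hp1 : 1 ≤ p) (hpn : p ≤ n)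
    (a b : Fin n → ℝ) (D : Fin n → Fin n → WithBot ℝ) (x : Fin n → ℝ)
    (hx : ∀ i j, D i j ≤ ((x i - x j : ℝ) : WithBot ℝ)) :
    minMaxValue p (fun i j => ((a i - b j : ℝ) : WithBot ℝ) + D i j) ≤
      ((maxmin p (fun i => a i + x i) - maxmin p (fun j => b j + x j) : ℝ) : WithBot ℝ) := by
  obtain ⟨S₁, hS₁card, hS₁⟩ := exists_card_eq_forall_le_maxmin (fun i => a i + x i) hp1 hpn
  obtain ⟨S₂, hS₂card, hS₂⟩ := exists_card_eq_forall_maxmin_le (fun j => b j + x j) hp1 hpn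
  refine (minMaxValue_le_sup _ hS₁card hS₂card).trans (Finset.sup_le fun q hq => ?_)
  obtain ⟨hi, hj⟩ := Finset.mem_product.mp hq
  calc ((a q.1 - b q.2 : ℝ) : WithBot ℝ) + D q.1 q.2
      ≤ ((a q.1 - b q.2 : ℝ) : WithBot ℝ) + ((x q.1 - x q.2 : ℝ) : WithBot ℝ) :=
        add_le_add_right (hx q.1 q.2) _
    _ ≤ _ := by
        rw [← WithBot.coe_add, WithBot.coe_le_coe]
        linarith [hS₁ q.1 hi, hS₂ q.2 hj]

/-- If `x` lies in the zone of `D` (i.e. `D i j ≤ x i − x j` for all `i, j`), then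
`⊕_p(i ↦ a i + x i) − ⊕_p(j ↦ b j + x j) ≥ MinMaxValue(F | p, n+1−p)` where
`F i j = a i − b j + D i j`. -/
theorem maxmin_diff_ge_minMaxValue (n p : ℕ) (hn : 1 ≤ n) (hp1 : 1 ≤ p) (hpn : p ≤ n)
    (a b : Fin n → ℝ) (D : Fin n → Fin n → WithBot ℝ) (x : Fin n → ℝ)
    (hx : ∀ i j, D i j ≤ ((x i - x j : ℝ) : WithBot ℝ)) :
    minMaxValue p (fun i j => ((a i - b j : ℝ) : WithBot ℝ) + D i j) ≤
      ((maxmin p (fun i => a i + x i) - maxmin p (fun j => b j + x j) : ℝ) : WithBot ℝ) :=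
  maxmin_diff_ge_minMaxValue_general n p hp1 hpn a b D x hx
end

section
/- Let n ≥ 1, let p be an integer with 1 ≤ p ≤ n, let A be an n×n real matrix, and let (D_p^k)_{k≥0} be the associated over-approximation sequence. Then for every k ≥ 0 and every x ∈ Zone(D_p^k), the vector A ⊗_p x belongs to Zone(D_p^{k+1}). -/
/-- The over-approximation sequence `(D_p^k)_{k ≥ 0}` associated with `A`: `D_p^0` is the
max-plus identity matrix and
`D_p^{k+1}(i,j) = MinMaxValue((l,m) ↦ A i l − A j m + D_p^k l m | p, n+1−p)`. -/
noncomputable def Dseq {n : ℕ} (A : Fin n → Fin n → ℝ) (p : ℕ) :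
    ℕ → Fin n → Fin n → WithBot ℝ
  | 0 => fun i j => if i = j then 0 else ⊥
  | (k + 1) => fun i j =>
      minMaxValue p (fun l m => ((A i l - A j m : ℝ) : WithBot ℝ) + Dseq A p k l m)

/-- The zone of a DBM `D` over `ℝ ∪ {−∞}`: all real vectors `x` with
`x i − x j ≥ D i j` for all `i, j`. -/
def zone {n : ℕ} (D : Fin n → Fin n → WithBot ℝ) : Set (Fin n → ℝ) :=
  {x | ∀ i j, D i j ≤ ((x i - x j : ℝ) : WithBot ℝ)}

/-!
Put `u := A ⊗_p x`. Since `u i` is the `p`-th smallest of the numbers `A i l + x l`, at least `p`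
indices `l` satisfy `A i l + x l ≤ u i`, and at least `n + 1 - p` indices `m` satisfy
`u j ≤ A j m + x m`. For such `l` and `m`, since `x ∈ Zone(D_p^k)`,
`A i l - A j m + D_p^k l m ≤ A i l - A j m + x l - x m ≤ u i - u j`,
so these index sets, shrunk to sizes `p` and `n + 1 - p`, are admissible in `MinMaxValue`
and bound `D_p^{k+1} i j` by `u i - u j`.
-/

open Finset

namespace List

variable {α : Type*} [Preorder α] [DecidableLE α] {l : List α}

theorem SortedLE.succ_le_countP_le_getElem (hl : l.SortedLE) {i : ℕ} (hi : i < l.length) :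
    i + 1 ≤ l.countP (· ≤ l[i]) := by
  have hle : ∀ a ∈ l.take (i + 1), a ≤ l[i] := by
    intro a ha
    obtain ⟨j, hj, rfl⟩ := getElem_of_mem ha
    rw [getElem_take]
    exact hl.getElem_le_getElem_of_le (by simp at hj; omega)
  calc i + 1 = (l.take (i + 1)).countP (· ≤ l[i]) := by
        rw [countP_eq_length.mpr (by simpa using hle), length_take]; omega
    _ ≤ l.countP (· ≤ l[i]) := (take_sublist _ l).countP_le

theorem SortedLE.length_sub_le_countP_getElem_le (hl : l.SortedLE) {i : ℕ} (hi : i < l.length) :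
    l.length - i ≤ l.countP (l[i] ≤ ·) := by
  have hge : ∀ a ∈ l.drop i, l[i] ≤ a := by
    intro a ha
    obtain ⟨j, hj, rfl⟩ := getElem_of_mem ha
    rw [getElem_drop]
    exact hl.getElem_le_getElem_of_le (by omega)
  calc l.length - i = (l.drop i).countP (l[i] ≤ ·) := by
        rw [countP_eq_length.mpr (by simpa using hge), length_drop]
    _ ≤ l.countP (l[i] ≤ ·) := (drop_sublist _ l).countP_le

end List

section Maxmin

variable {n p : ℕ} (s : Fin n → ℝ)

noncomputable abbrev sortedValues : List ℝ :=
  Multiset.sort (Multiset.map s (univ : Finset (Fin n)).val) (· ≤ ·)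

lemma length_sortedValues : (sortedValues s).length = n := by
  simp [Multiset.length_sort]

lemma sortedLE_sortedValues : (sortedValues s).SortedLE :=
  (Multiset.pairwise_sort _ _).sortedLE

lemma maxmin_eq_getElem (hp : p - 1 < (sortedValues s).length) :
    maxmin p s = (sortedValues s)[p - 1] :=
  List.getD_eq_getElem _ _ _

lemma card_filter_eq_countP_sortedValues (P : ℝ → Prop) [DecidablePred P] :
    #{l | P (s l)} = (sortedValues s).countP P := by
  rw [← Multiset.coe_countP, Multiset.sort_eq, Multiset.countP_map]
  rfl

lemma le_card_filter_le_maxmin (hp1 : 1 ≤ p) (hpn : p ≤ n) :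
    p ≤ #{l | s l ≤ maxmin p s} := by
  have hp : p - 1 < (sortedValues s).length := by rw [length_sortedValues]; omega
  rw [card_filter_eq_countP_sortedValues s (· ≤ maxmin p s), maxmin_eq_getElem s hp]
  have := (sortedLE_sortedValues s).succ_le_countP_le_getElem hp
  omega

lemma le_card_filter_maxmin_le (hp1 : 1 ≤ p) (hpn : p ≤ n) :
    n + 1 - p ≤ #{l | maxmin p s ≤ s l} := by
  have hp : p - 1 < (sortedValues s).length := by rw [length_sortedValues]; omega
  rw [card_filter_eq_countP_sortedValues s (maxmin p s ≤ ·), maxmin_eq_getElem s hp]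
  have := (sortedLE_sortedValues s).length_sub_le_countP_getElem_le hp
  have := length_sortedValues s
  omega

end Maxmin

lemma minMaxValue_le {n p : ℕ} {F : Fin n → Fin n → WithBot ℝ} {v : WithBot ℝ}
    {S₁ S₂ : Finset (Fin n)} (h₁ : p ≤ #S₁) (h₂ : n + 1 - p ≤ #S₂)
    (hF : ∀ l ∈ S₁, ∀ m ∈ S₂, F l m ≤ v) : minMaxValue p F ≤ v := by
  obtain ⟨T₁, hT₁, hcard₁⟩ := exists_subset_card_eq h₁
  obtain ⟨T₂, hT₂, hcard₂⟩ := exists_subset_card_eq h₂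
  calc minMaxValue p F ≤ (T₁ ×ˢ T₂).sup fun q => F q.1 q.2 :=
        csInf_le (OrderBot.bddBelow _) ⟨T₁, T₂, hcard₁, hcard₂, rfl⟩
    _ ≤ v := Finset.sup_le fun q hq =>
        hF _ (hT₁ (mem_product.mp hq).1) _ (hT₂ (mem_product.mp hq).2)

theorem image_subset_next_zone_general (n p : ℕ) (hp1 : 1 ≤ p) (hpn : p ≤ n)
    (A : Fin n → Fin n → ℝ) (k : ℕ) (x : Fin n → ℝ)
    (hx : x ∈ zone (Dseq A p k)) :
    mmProd p A x ∈ zone (Dseq A p (k + 1)) := by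
  intro i j
  rw [Dseq]
  refine minMaxValue_le (le_card_filter_le_maxmin (fun l => A i l + x l) hp1 hpn)
    (le_card_filter_maxmin_le (fun m => A j m + x m) hp1 hpn) fun l hl m hm => ?_
  rw [mem_filter_univ] at hl hm
  calc ((A i l - A j m : ℝ) : WithBot ℝ) + Dseq A p k l m
      ≤ ((A i l - A j m : ℝ) : WithBot ℝ) + ((x l - x m : ℝ) : WithBot ℝ) := by
        gcongr; exact hx l m
    _ = ((A i l - A j m + (x l - x m) : ℝ) : WithBot ℝ) := (WithBot.coe_add _ _).symm
    _ ≤ ((mmProd p A x i - mmProd p A x j : ℝ) : WithBot ℝ) :=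
        WithBot.coe_le_coe.mpr (by simp only [mmProd]; linarith)

/-- The image of the zone `Zone(D_p^k)` under `A ⊗_p ·` is contained in `Zone(D_p^{k+1})`. -/
theorem image_subset_next_zone (n p : ℕ) (hn : 1 ≤ n) (hp1 : 1 ≤ p) (hpn : p ≤ n)
    (A : Fin n → Fin n → ℝ) (k : ℕ) (x : Fin n → ℝ)
    (hx : x ∈ zone (Dseq A p k)) :
    mmProd p A x ∈ zone (Dseq A p (k + 1)) :=
  image_subset_next_zone_general n p hp1 hpn A k x hx
end

section
/- Let n ≥ 1, let p be an integer with 1 ≤ p ≤ n, let A be an n×n real matrix, and let (D_p^k)_{k≥0} be the associated over-approximation sequence. Then for all i, j ∈ {1,…,n}, D_p^1(i,j) = min{A(i,1) − A(j,1), …, A(i,n) − A(j,n)} (a real number). In particular D_p^1 does not depend on p, i.e., D_1^1 = D_2^1 = ⋯ = D_n^1. -/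
open Finset

section Combinatorics

variable {α : Type*} [DecidableEq α]

theorem exists_card_eq_inter_eq_singleton [Fintype α] (a : α) {p : ℕ} (hp1 : 1 ≤ p)
    (hp : p ≤ Fintype.card α) :
    ∃ S₁ S₂ : Finset α, #S₁ = p ∧ #S₂ = Fintype.card α + 1 - p ∧ S₁ ∩ S₂ = {a} := by
  obtain ⟨S₁, haS₁, -, hS₁⟩ := exists_subsuperset_card_eq (subset_univ {a})
    (by simpa using hp1) (by simpa using hp)
  have ha : a ∈ S₁ := singleton_subset_iff.1 haS₁
  refine ⟨S₁, insert a S₁ᶜ, hS₁, ?_, ?_⟩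
  · rw [card_insert_of_notMem (notMem_compl.2 ha), card_compl, hS₁]
    omega
  · rw [inter_insert_of_mem ha, inter_compl, insert_empty]

theorem Finset.sup_product_ite_eq {β : Type*} [SemilatticeSup β] [OrderBot β]
    (s t : Finset α) (f : α → β) :
    (s ×ˢ t).sup (fun q => if q.1 = q.2 then f q.1 else ⊥) = (s ∩ t).sup f := by
  apply le_antisymm
  · refine Finset.sup_le fun ⟨a, b⟩ hab => ?_
    obtain ⟨ha, hb⟩ := mem_product.1 hab
    dsimp only at ha hb ⊢
    split_ifs with h
    · subst h
      exact le_sup (mem_inter.2 ⟨ha, hb⟩)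
    · exact bot_le
  · refine Finset.sup_le fun a ha => ?_
    obtain ⟨ha₁, ha₂⟩ := mem_inter.1 ha
    exact le_sup_of_le (mk_mem_product ha₁ ha₂) (by simp)

end Combinatorics

theorem minMaxValue_ite_eq {n p : ℕ} (hp1 : 1 ≤ p) (hpn : p ≤ n) (f : Fin n → ℝ)
    (hne : (univ : Finset (Fin n)).Nonempty) :
    minMaxValue p (fun l m => if l = m then (f l : WithBot ℝ) else ⊥) =
      ((univ.inf' hne f : ℝ) : WithBot ℝ) := by
  unfold minMaxValue
  beta_reduce
  refine IsLeast.csInf_eq ⟨?_, ?_⟩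
  · obtain ⟨l₀, -, hl₀⟩ := exists_mem_eq_inf' hne f
    obtain ⟨S₁, S₂, hS₁, hS₂, hS⟩ := exists_card_eq_inter_eq_singleton l₀ hp1 (by simpa using hpn)
    refine ⟨S₁, S₂, hS₁, by simpa using hS₂, ?_⟩
    rw [sup_product_ite_eq S₁ S₂ fun l => (f l : WithBot ℝ), hS, sup_singleton, hl₀]
  · rintro v ⟨S₁, S₂, hS₁, hS₂, rfl⟩
    rw [sup_product_ite_eq S₁ S₂ fun l => (f l : WithBot ℝ)]
    obtain ⟨l, hl⟩ := inter_nonempty_of_card_lt_card_add_card (subset_univ S₁) (subset_univ S₂)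
      (by simp only [card_univ, Fintype.card_fin]; omega)
    exact le_sup_of_le hl (WithBot.coe_le_coe.2 (inf'_le f (mem_univ l)))

theorem Dseq_one_apply {n : ℕ} (A : Fin n → Fin n → ℝ) (p : ℕ) (i j : Fin n) :
    Dseq A p 1 i j =
      minMaxValue p (fun l m => if l = m then ((A i l - A j l : ℝ) : WithBot ℝ) else ⊥) := by
  simp only [Dseq]
  congr 1
  funext l m
  split_ifs with h <;> simp [h]

/-- `D_p^1(i,j) = min_l (A i l − A j l)` (a real number); in particular `D_p^1` does not
depend on `p`. -/
theorem Dseq_one_eq (n p : ℕ) (hn : 1 ≤ n) (hp1 : 1 ≤ p) (hpn : p ≤ n)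
    (A : Fin n → Fin n → ℝ) :
    (∀ i j, Dseq A p 1 i j =
      (((Finset.univ : Finset (Fin n)).inf' ⟨⟨0, hn⟩, Finset.mem_univ _⟩
        (fun l => A i l - A j l) : ℝ) : WithBot ℝ)) ∧
    (∀ q : ℕ, 1 ≤ q → q ≤ n → Dseq A p 1 = Dseq A q 1) := by
  have hD : ∀ q, 1 ≤ q → q ≤ n → ∀ i j, Dseq A q 1 i j =
      (((univ : Finset (Fin n)).inf' ⟨⟨0, hn⟩, mem_univ _⟩ (fun l => A i l - A j l) : ℝ) :
        WithBot ℝ) :=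
    fun q hq1 hqn i j => by rw [Dseq_one_apply, minMaxValue_ite_eq hq1 hqn _ ⟨⟨0, hn⟩, mem_univ _⟩]
  exact ⟨hD p hp1 hpn, fun q hq1 hqn => funext₂ fun i j => by rw [hD p hp1 hpn, hD q hq1 hqn]⟩
end
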